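/- Let n ≥ 4 be even, F any field, β ∈ F \ {0}, and let L be the (n+1)-dimensional n-Lie algebra with nonzero brackets [e_2,...,e_{n+1}] = e_1 + βe_2 and [e_1,e_3,...,e_{n+1}] = e_2 (case (2b)). Then the element N = x_2 x_1 − x_1 x_2 lies in the ideal I of F⟨x_1,...,x_{n+1}⟩ generated by G_1 = (-1)^{⌊n/2⌋}(alt(x_2,...,x_{n+1}) − (x_1 + βx_2)), G_2 = (-1)^{⌊n/2⌋}(alt(x_1,x_3,...,x_{n+1}) − x_2), and G_i = (-1)^{⌊n/2⌋} alt(x_1,...,x̂_i,...,x_{n+1}) for 3 ≤ i ≤ n+1. -/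

import Mathlib

open FreeAlgebra

/-- The `n`-ary alternating sum in an associative algebra. -/
noncomputable def altSum {A : Type} [Ring A] (n : ℕ) (x : Fin n → A) : A :=
  ∑ σ : Equiv.Perm (Fin n), (Equiv.Perm.sign σ : ℤ) • (List.ofFn fun k => x (σ k)).prod

/-! Expanding `alt(x_1, …, x_{n+1})` along its first factor and along its last one (the cyclic
rotation of `n + 1` letters is an even permutation because `n` is even) gives
`∑ i, (-1)^i [x_i, alt(x_1, …, x̂_i, …, x_{n+1})] = 0`. Each `alt(…, x̂_i, …)` is `±G_i` plus a
correction `D_i` (`D_1 = x_1 + βx_2`, `D_2 = x_2`, all others `0`), and `[x_i, G_i] ∈ I`, so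
`∑ i, (-1)^i [x_i, D_i] = β [x_1, x_2]` lies in `I`. -/

open Equiv

namespace Fin

variable {n : ℕ}

def succAbovePerm (i : Fin (n + 1)) (σ : Perm (Fin n)) : Perm (Fin (n + 1)) :=
  i.cycleRange⁻¹ * Perm.decomposeFin.symm (0, σ)

@[simp]
theorem succAbovePerm_zero (i : Fin (n + 1)) (σ : Perm (Fin n)) : i.succAbovePerm σ 0 = i := by
  simp [succAbovePerm, Perm.inv_def, cycleRange_symm_zero]

@[simp]
theorem succAbovePerm_succ (i : Fin (n + 1)) (σ : Perm (Fin n)) (k : Fin n) :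
    i.succAbovePerm σ k.succ = i.succAbove (σ k) := by
  simp [succAbovePerm, Perm.inv_def, cycleRange_symm_succ]

theorem sign_succAbovePerm (i : Fin (n + 1)) (σ : Perm (Fin n)) :
    Perm.sign (i.succAbovePerm σ) = (-1) ^ (i : ℕ) * Perm.sign σ := by
  simp [succAbovePerm, sign_cycleRange, Perm.decomposeFin.symm_sign]

theorem bijective_succAbovePerm :
    Function.Bijective fun p : Fin (n + 1) × Perm (Fin n) => p.1.succAbovePerm p.2 := by
  refine (Fintype.bijective_iff_injective_and_card _).2 ⟨?_, ?_⟩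
  · rintro ⟨i, σ⟩ ⟨j, τ⟩ h
    have hij : i = j := by simpa using congrArg (· 0) h
    subst hij
    refine Prod.ext rfl (Equiv.ext fun k => ?_)
    simpa using congrArg (· k.succ) h
  · simp [Fintype.card_perm, Nat.factorial_succ]

theorem sum_perm_succ {M : Type*} [AddCommMonoid M] (f : Perm (Fin (n + 1)) → M) :
    ∑ τ, f τ = ∑ i : Fin (n + 1), ∑ σ, f (i.succAbovePerm σ) := by
  rw [← Fintype.sum_prod_type']
  exact (Fintype.sum_bijective _ bijective_succAbovePerm _ _ fun _ => rfl).symm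

end Fin

section altSum

variable {A : Type} [Ring A] {n : ℕ}

theorem altSum_succ (x : Fin (n + 1) → A) :
    altSum (n + 1) x =
      ∑ i : Fin (n + 1), (-1 : ℤ) ^ (i : ℕ) • (x i * altSum n (fun k => x (i.succAbove k))) := by
  rw [altSum, Fin.sum_perm_succ]
  refine Finset.sum_congr rfl fun i _ => ?_
  simp only [altSum, Finset.mul_sum, Finset.smul_sum, List.ofFn_succ, List.prod_cons,
    Fin.succAbovePerm_zero, Fin.succAbovePerm_succ, Fin.sign_succAbovePerm, mul_smul_comm,
    smul_smul]
  push_cast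
  rfl

theorem altSum_succ_of_even (hn : Even n) (x : Fin (n + 1) → A) :
    altSum (n + 1) x =
      ∑ i : Fin (n + 1), (-1 : ℤ) ^ (i : ℕ) • (altSum n (fun k => x (i.succAbove k)) * x i) := by
  have hrot : altSum (n + 1) x = ∑ τ : Perm (Fin (n + 1)),
      (Perm.sign τ : ℤ) • ((List.ofFn fun k => x (τ k.succ)).prod * x (τ 0)) := by
    refine (Fintype.sum_equiv (Equiv.mulRight (finRotate (n + 1))) _ _ fun τ => ?_).symm
    rw [coe_mulRight, map_mul, sign_finRotate, Nat.add_sub_cancel, hn.neg_one_pow, mul_one,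
      List.ofFn_succ', List.prod_concat]
    simp only [Perm.coe_mul, Function.comp_apply, finRotate_apply, Fin.coeSucc_eq_succ,
      Fin.last_add_one]
  rw [hrot, Fin.sum_perm_succ]
  refine Finset.sum_congr rfl fun i _ => ?_
  simp only [altSum, Finset.sum_mul, Finset.smul_sum, Fin.succAbovePerm_zero,
    Fin.succAbovePerm_succ, Fin.sign_succAbovePerm, smul_mul_assoc, smul_smul]
  push_cast
  rfl

theorem sum_neg_one_pow_smul_commutator_altSum (hn : Even n) (x : Fin (n + 1) → A) :
    ∑ i : Fin (n + 1), (-1 : ℤ) ^ (i : ℕ) • (x i * altSum n (fun k => x (i.succAbove k)) -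
      altSum n (fun k => x (i.succAbove k)) * x i) = 0 := by
  simp only [smul_sub, Finset.sum_sub_distrib, ← altSum_succ, ← altSum_succ_of_even hn, sub_self]

end altSum

section span

variable {F : Type*} {R : Type} [Field F] [Ring R] [Algebra F R]

theorem commutator_mem_span_mul_mul {ι : Type*} (G : ι → R) (a : R) (i : ι) :
    a * G i - G i * a ∈ Submodule.span F {z : R | ∃ (a b : R) (i : ι), z = a * G i * b} :=
  sub_mem (Submodule.subset_span ⟨a, 1, i, by rw [mul_one]⟩)
    (Submodule.subset_span ⟨1, a, i, by rw [one_mul]⟩)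

theorem sum_neg_one_pow_smul_commutator_mem_span {n : ℕ} (hn : Even n)
    (x G D : Fin (n + 1) → R) {c : F} (hc : c ≠ 0)
    (hG : ∀ i, G i = c • (altSum n (fun k => x (i.succAbove k)) - D i)) :
    ∑ i : Fin (n + 1), (-1 : ℤ) ^ (i : ℕ) • (x i * D i - D i * x i) ∈
      Submodule.span F {z : R | ∃ (a b : R) (i : Fin (n + 1)), z = a * G i * b} := by
  have hterm : ∀ i : Fin (n + 1), (-1 : ℤ) ^ (i : ℕ) • (x i * D i - D i * x i) =
      (-1 : ℤ) ^ (i : ℕ) • (x i * altSum n (fun k => x (i.succAbove k)) -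
        altSum n (fun k => x (i.succAbove k)) * x i) -
      (-1 : ℤ) ^ (i : ℕ) • c⁻¹ • (x i * G i - G i * x i) := fun i => by
    have hD : D i = altSum n (fun k => x (i.succAbove k)) - c⁻¹ • G i := by
      rw [hG i, inv_smul_smul₀ hc, sub_sub_cancel]
    rw [hD]
    simp only [mul_sub, sub_mul, mul_smul_comm, smul_mul_assoc, smul_sub]
    abel
  rw [Finset.sum_congr rfl fun i _ => hterm i, Finset.sum_sub_distrib,
    sum_neg_one_pow_smul_commutator_altSum hn, zero_sub]
  exact neg_mem (sum_mem fun i _ =>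
    zsmul_mem (Submodule.smul_mem _ _ (commutator_mem_span_mul_mul G _ i)) _)

end span

/-- Case (2b): for the `n`-Lie algebra with nonzero brackets
`[e_2,...,e_{n+1}] = e_1 + βe_2` (`β ≠ 0`) and `[e_1,e_3,...,e_{n+1}] = e_2` (`n ≥ 4`
even), the element `N = x_2x_1 − x_1x_2` lies in the two-sided ideal
`I = ⟨G_1, ..., G_{n+1}⟩`.  (`0`-indexed: `x_1 ↔ ι F 0`, `x_2 ↔ ι F 1`.) -/
theorem case2b_new_generator (F : Type) [Field F]
    (n : ℕ) (hn : 4 ≤ n) (heven : Even n) (β : F) (hβ : β ≠ 0)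
    (G : Fin (n + 1) → FreeAlgebra F (Fin (n + 1)))
    (hG0 : G 0 = (-1 : F) ^ (n / 2) •
      (altSum n (fun k => ι F ((0 : Fin (n + 1)).succAbove k)) - (ι F 0 + β • ι F 1)))
    (hG1 : G 1 = (-1 : F) ^ (n / 2) •
      (altSum n (fun k => ι F ((1 : Fin (n + 1)).succAbove k)) - ι F 1))
    (hG : ∀ i : Fin (n + 1), 2 ≤ (i : ℕ) →
      G i = (-1 : F) ^ (n / 2) • altSum n (fun k => ι F (i.succAbove k))) :
    ι F 1 * ι F 0 - ι F 0 * ι F 1 ∈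
      Submodule.span F {z : FreeAlgebra F (Fin (n + 1)) |
        ∃ (a b : FreeAlgebra F (Fin (n + 1))) (i : Fin (n + 1)), z = a * G i * b} := by
  obtain ⟨m, rfl⟩ : ∃ m, n = m + 1 := ⟨n - 1, by omega⟩
  set x : Fin (m + 1 + 1) → FreeAlgebra F (Fin (m + 1 + 1)) := ι F
  have hc : (-1 : F) ^ ((m + 1) / 2) ≠ 0 := pow_ne_zero _ (neg_ne_zero.2 one_ne_zero)
  let D : Fin (m + 1 + 1) → FreeAlgebra F (Fin (m + 1 + 1)) :=
    Fin.cons (x 0 + β • x 1) (Fin.cons (x 1) 0)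
  have hGD : ∀ i, G i = (-1 : F) ^ ((m + 1) / 2) •
      (altSum (m + 1) (fun k => x (i.succAbove k)) - D i) := by
    refine Fin.cases hG0 (Fin.cases ?_ fun k => ?_)
    · rw [Fin.succ_zero_eq_one]
      exact hG1
    · simpa [D] using hG _ (by simp)
  have hsum : ∑ i : Fin (m + 1 + 1), (-1 : ℤ) ^ (i : ℕ) • (x i * D i - D i * x i) =
      β • (x 0 * x 1 - x 1 * x 0) := by
    simp [Fin.sum_univ_succ, D, mul_add, add_mul, smul_sub]
  have hmem := sum_neg_one_pow_smul_commutator_mem_span heven x G D hc hGD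
  rw [hsum, Submodule.smul_mem_iff _ hβ] at hmem
  rw [← neg_sub]
  exact neg_mem hmem
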